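/- Let Z be a tree shift on the binary tree over a finite alphabet A. Then the upper intermediate entropy of Z does not exceed its entropy: limsup_{n→∞} (log q_Z(n))/n ≤ inf_{m≥0} (log q_Z(2^{m+1}−1))/(2^{m+1}−1). -/

import Mathlib

open Filter

/-- The binary value of a word `w = w₁…w_ℓ ∈ {0,1}*`: `val(w) = Σ_{i=1}^{ℓ} w_i 2^{ℓ−i}`. -/
def bval (w : List (Fin 2)) : ℕ := w.foldl (fun a b => 2 * a + b.val) 0

lemma bval_foldl (w : List (Fin 2)) (a : ℕ) :
    w.foldl (fun a b => 2 * a + b.val) a = a * 2 ^ w.length + bval w := by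
  induction w generalizing a with
  | nil => simp [bval]
  | cons b w ih =>
    simp only [List.foldl_cons, List.length_cons, bval]
    rw [ih (2 * a + b.val), ih (2 * 0 + b.val)]
    ring

lemma bval_cons (b : Fin 2) (w : List (Fin 2)) :
    bval (b :: w) = b.val * 2 ^ w.length + bval w := by
  show (b :: w).foldl _ 0 = _
  rw [List.foldl_cons, bval_foldl]
  ring_nf

lemma bval_append (v u : List (Fin 2)) :
    bval (v ++ u) = bval v * 2 ^ u.length + bval u := by
  show (v ++ u).foldl _ 0 = _
  rw [List.foldl_append, bval_foldl]
  rfl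

lemma bval_lt (w : List (Fin 2)) : bval w < 2 ^ w.length := by
  induction w with
  | nil => simp [bval]
  | cons b w ih =>
    rw [bval_cons, List.length_cons, pow_succ]
    have hb : b.val ≤ 1 := Nat.lt_succ_iff.mp b.isLt
    have : b.val * 2 ^ w.length ≤ 2 ^ w.length := by
      calc b.val * 2 ^ w.length ≤ 1 * 2 ^ w.length := by
            exact Nat.mul_le_mul_right _ hb
        _ = 2 ^ w.length := one_mul _
    omega

lemma bval_inj : ∀ {v w : List (Fin 2)}, v.length = w.length → bval v = bval w → v = w := by
  intro v
  induction v with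
  | nil => intro w h _; exact (List.length_eq_zero_iff.mp h.symm).symm
  | cons b v ih =>
    intro w h hb
    cases w with
    | nil => simp at h
    | cons c w =>
      simp only [List.length_cons, Nat.succ_inj] at h
      rw [bval_cons, bval_cons, h] at hb
      have h1 := bval_lt v
      have h2 := bval_lt w
      rw [h] at h1
      have hbc : b = c ∧ bval v = bval w := by
        have hb1 : b.val ≤ 1 := Nat.lt_succ_iff.mp b.isLt
        have hc1 : c.val ≤ 1 := Nat.lt_succ_iff.mp c.isLt
        have hpos : 0 < 2 ^ w.length := Nat.pow_pos (by norm_num)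
        constructor
        · apply Fin.ext
          interval_cases hbv : b.val <;> interval_cases hcv : c.val <;> omega
        · interval_cases hbv : b.val <;> interval_cases hcv : c.val <;> omega
      rw [hbc.1, ih h hbc.2]

lemma index_le_index_append (v u : List (Fin 2)) :
    2 ^ v.length + bval v ≤ 2 ^ (v ++ u).length + bval (v ++ u) := by
  rw [List.length_append, bval_append, pow_add]
  have h1 : 1 ≤ 2 ^ u.length := Nat.one_le_two_pow
  have h2 : 2 ^ v.length ≤ 2 ^ v.length * 2 ^ u.length := Nat.le_mul_of_pos_right _ (by omega)
  have h3 : bval v ≤ bval v * 2 ^ u.length := Nat.le_mul_of_pos_right _ (by omega)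
  omega

lemma index_inj {v w : List (Fin 2)}
    (h : 2 ^ v.length + bval v = 2 ^ w.length + bval w) : v = w := by
  have hlen : v.length = w.length := by
    rcases lt_trichotomy v.length w.length with hl | hl | hl
    · exfalso
      have h1 := bval_lt v
      have h2 : 2 ^ (v.length + 1) ≤ 2 ^ w.length := Nat.pow_le_pow_right (by norm_num) hl
      have : (2:ℕ) ^ (v.length + 1) = 2 * 2 ^ v.length := by ring
      omega
    · exact hl
    · exfalso
      have h1 := bval_lt w
      have h2 : 2 ^ (w.length + 1) ≤ 2 ^ v.length := Nat.pow_le_pow_right (by norm_num) hl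
      have : (2:ℕ) ^ (w.length + 1) = 2 * 2 ^ w.length := by ring
      omega
  apply bval_inj hlen
  rw [hlen] at h
  omega

/-- injection of the domain into `Fin n`. -/
def domToFin (n : ℕ) (w : {w : List (Fin 2) // 2 ^ w.length + bval w ≤ n}) : Fin n :=
  ⟨2 ^ w.val.length + bval w.val - 1, by
    have h := w.prop
    have h1 : 1 ≤ 2 ^ w.val.length := Nat.one_le_two_pow
    omega⟩

lemma domToFin_inj (n : ℕ) : Function.Injective (domToFin n) := by
  intro v w h
  have h1 : 1 ≤ 2 ^ v.val.length := Nat.one_le_two_pow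
  have h2 : 1 ≤ 2 ^ w.val.length := Nat.one_le_two_pow
  have := Fin.val_eq_val (domToFin n v) (domToFin n w)
  apply Subtype.ext
  apply index_inj
  simp only [domToFin, Fin.mk.injEq] at h
  omega

instance domFinite (n : ℕ) : Finite {w : List (Fin 2) // 2 ^ w.length + bval w ≤ n} :=
  Finite.of_injective _ (domToFin_inj n)

lemma card_dom_le (n : ℕ) : Nat.card {w : List (Fin 2) // 2 ^ w.length + bval w ≤ n} ≤ n := by
  have := Nat.card_le_card_of_injective _ (domToFin_inj n)
  simpa using this

section TreeShift

variable {A : Type} [Fintype A] [Nonempty A]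

/-- The set of patterns of `Z` on the first `n` vertices. -/
def Pat (Z : Set (List (Fin 2) → A)) (n : ℕ) :
    Set ({w : List (Fin 2) // 2 ^ w.length + bval w ≤ n} → A) :=
  {f | ∃ τ ∈ Z, ∀ w, f w = τ w.val}

noncomputable def qq (Z : Set (List (Fin 2) → A)) (n : ℕ) : ℕ := Nat.card (Pat Z n)

variable {Z : Set (List (Fin 2) → A)}

lemma qq_pos (hZ : Z.Nonempty) (n : ℕ) : 0 < qq Z n := by
  obtain ⟨τ, hτ⟩ := hZ
  have : Nonempty (Pat Z n) := ⟨⟨fun w => τ w.val, τ, hτ, fun _ => rfl⟩⟩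
  exact Nat.card_pos

lemma one_le_qq_real (hZ : Z.Nonempty) (n : ℕ) : (1 : ℝ) ≤ (qq Z n : ℝ) := by
  exact_mod_cast qq_pos hZ n

lemma log_qq_nonneg (hZ : Z.Nonempty) (n : ℕ) : 0 ≤ Real.log (qq Z n) :=
  Real.log_nonneg (one_le_qq_real hZ n)

lemma shift_mem (hinv : ∀ s : Fin 2, ∀ τ ∈ Z, (fun w => τ (s :: w)) ∈ Z) :
    ∀ (v : List (Fin 2)) {τ}, τ ∈ Z → (fun w => τ (v ++ w)) ∈ Z := by
  intro v
  induction v with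
  | nil => intro τ hτ; simpa using hτ
  | cons s v ih =>
    intro τ hτ
    have h1 : (fun w => τ (s :: w)) ∈ Z := hinv s τ hτ
    have h2 := ih h1
    simpa using h2

/-- Core counting lemma: if blocks rooted at `ρ i` of height `h i` cover the first `n`
vertices, then the number of patterns on the first `n` vertices is at most the product of
the numbers of patterns on complete trees of heights `h i`. -/
lemma qq_le_prod (hinv : ∀ s : Fin 2, ∀ τ ∈ Z, (fun w => τ (s :: w)) ∈ Z)
    {n : ℕ} {I : Type} [Fintype I] (ρ : I → List (Fin 2)) (h : I → ℕ)
    (cover : ∀ w : List (Fin 2), 2 ^ w.length + bval w ≤ n →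
      ∃ i u, w = ρ i ++ u ∧ u.length ≤ h i) :
    qq Z n ≤ ∏ i : I, qq Z (2 ^ (h i + 1) - 1) := by
  classical
  -- the map sending a pattern to its localizations at the roots
  have hmem : ∀ (u : List (Fin 2)) (i : I), u.length ≤ h i →
      2 ^ u.length + bval u ≤ 2 ^ (h i + 1) - 1 := by
    intro u i hu
    have h1 := bval_lt u
    have h2 : 2 ^ (u.length + 1) ≤ 2 ^ (h i + 1) := Nat.pow_le_pow_right (by norm_num) (by omega)
    have h3 : (2:ℕ) ^ (u.length + 1) = 2 * 2 ^ u.length := by ring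
    omega
  set T := ∀ i : I, Pat Z (2 ^ (h i + 1) - 1) with hT
  have : ∀ f : Pat Z n, ∃ τ ∈ Z, ∀ w, f.val w = τ w.val := fun f => f.2
  choose tau htauZ htaueq using this
  let Φ : Pat Z n → T := fun f i =>
    ⟨fun u => tau f (ρ i ++ u.val), (fun w => tau f (ρ i ++ w)), shift_mem hinv (ρ i) (htauZ f),
      fun _ => rfl⟩
  have hΦ : Function.Injective Φ := by
    intro f g hfg
    apply Subtype.ext
    funext w
    obtain ⟨i, u, hw, hu⟩ := cover w.val w.prop
    have hui : 2 ^ u.length + bval u ≤ 2 ^ (h i + 1) - 1 := hmem u i hu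
    have h1 : f.val w = tau f (ρ i ++ u) := by rw [htaueq f w, hw]
    have h2 : g.val w = tau g (ρ i ++ u) := by rw [htaueq g w, hw]
    have h3 : (Φ f i).val ⟨u, hui⟩ = (Φ g i).val ⟨u, hui⟩ := by rw [hfg]
    simpa [Φ, h1, h2] using h3
  calc qq Z n ≤ Nat.card T := Nat.card_le_card_of_injective Φ hΦ
    _ = ∏ i : I, qq Z (2 ^ (h i + 1) - 1) := by
        rw [hT, Nat.card_pi]
        rfl

/-- covering by singletons: `qq n ≤ qq 1 ^ n`. -/
lemma qq_le_pow (hinv : ∀ s : Fin 2, ∀ τ ∈ Z, (fun w => τ (s :: w)) ∈ Z) (hZ : Z.Nonempty)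
    (n : ℕ) : qq Z n ≤ qq Z 1 ^ n := by
  classical
  letI : Fintype {w : List (Fin 2) // 2 ^ w.length + bval w ≤ n} := Fintype.ofFinite _
  have h := qq_le_prod (Z := Z) hinv
    (I := {w : List (Fin 2) // 2 ^ w.length + bval w ≤ n}) (fun w => w.val) (fun _ => 0)
    (by
      intro w hw
      exact ⟨⟨w, hw⟩, [], by simp, by simp⟩)
  simp only [Finset.prod_const] at h
  have h1 : (2:ℕ) ^ (0 + 1) - 1 = 1 := by norm_num
  rw [h1] at h
  refine h.trans (Nat.pow_le_pow_right (qq_pos hZ 1) ?_)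
  have h2 := card_dom_le n
  rw [Nat.card_eq_fintype_card] at h2
  simpa using h2

end TreeShift

section TreeShift2
variable {A : Type} [Fintype A] [Nonempty A] {Z : Set (List (Fin 2) → A)}

noncomputable def aZ (Z : Set (List (Fin 2) → A)) (m : ℕ) : ℝ :=
  Real.log (qq Z (2 ^ (m + 1) - 1)) / ((2 : ℝ) ^ (m + 1) - 1)

lemma two_pow_sub_one_pos (m : ℕ) : (0 : ℝ) < (2 : ℝ) ^ (m + 1) - 1 := by
  have : (2 : ℝ) ^ (m + 1) ≥ 2 ^ 1 := by
    apply pow_le_pow_right₀ (by norm_num) (by omega)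
  norm_num at this ⊢
  linarith

lemma aZ_nonneg (hZ : Z.Nonempty) (m : ℕ) : 0 ≤ aZ Z m :=
  div_nonneg (log_qq_nonneg hZ _) (le_of_lt (two_pow_sub_one_pos m))

lemma aZ_mul (m : ℕ) : aZ Z m * ((2 : ℝ) ^ (m + 1) - 1) = Real.log (qq Z (2 ^ (m + 1) - 1)) :=
  div_mul_cancel₀ _ (ne_of_gt (two_pow_sub_one_pos m))

lemma exists_ofFn_take (w : List (Fin 2)) (k : ℕ) (hk : k ≤ w.length) :
    ∃ v : Fin k → Fin 2, List.ofFn v = w.take k := by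
  have h : (w.take k).length = k := by
    rw [List.length_take]; omega
  revert h
  generalize w.take k = l
  intro h
  subst h
  exact ⟨l.get, List.ofFn_get l⟩

set_option maxHeartbeats 1000000 in
/-- The key tiling estimate. -/
lemma key_lemma (hinv : ∀ s : Fin 2, ∀ τ ∈ Z, (fun w => τ (s :: w)) ∈ Z) (hZ : Z.Nonempty)
    (m ℓ n : ℕ) (hm : 1 ≤ m) (hℓ : m + 1 ≤ ℓ) (h1 : 2 ^ ℓ ≤ n) (h2 : n < 2 ^ (ℓ + 1)) :
    ∃ X Y : ℝ, 0 ≤ X ∧ 0 ≤ Y ∧ X + Y ≤ (n : ℝ) + 2 ^ m ∧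
      (n = 2 ^ (ℓ + 1) - 1 → Y = 0) ∧
      Real.log (qq Z n) ≤ Real.log (qq Z (2 ^ (m + 1) - 1)) + aZ Z m * X + aZ Z (m - 1) * Y := by
  classical
  set M := m + 1 with hM
  set d := ℓ - m with hd
  have hdm : d + m = ℓ := by omega
  obtain ⟨J, r, hrM, hdJr⟩ : ∃ J r, r < M ∧ r + J * M = d := by
    exact ⟨d / M, d % M, Nat.mod_lt _ (by omega), Nat.mod_add_div' d M⟩
  -- the condition deciding the height of a bottom root
  set c : (Fin d → Fin 2) → Prop := fun v => 2 ^ m * bval (List.ofFn v) + 2 ^ ℓ ≤ n with hc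
  -- index type of the covering
  set I : Type := Option ((Σ j : Fin J, (Fin (r + j.val * M) → Fin 2)) ⊕ (Fin d → Fin 2))
    with hI
  let ρ : I → List (Fin 2) := fun i => match i with
    | none => []
    | some (Sum.inl p) => List.ofFn p.2
    | some (Sum.inr v) => List.ofFn v
  let h : I → ℕ := fun i => match i with
    | none => m
    | some (Sum.inl _) => m
    | some (Sum.inr v) => if c v then m else m - 1
  -- the covering property
  have cover : ∀ w : List (Fin 2), 2 ^ w.length + bval w ≤ n →
      ∃ i u, w = ρ i ++ u ∧ u.length ≤ h i := by
    intro w hw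
    have hwl : w.length ≤ ℓ := by
      by_contra hcon
      push_neg at hcon
      have : 2 ^ (ℓ + 1) ≤ 2 ^ w.length := Nat.pow_le_pow_right (by norm_num) (by omega)
      omega
    rcases lt_or_ge w.length r with hlt | hge
    · exact ⟨none, w, by simp [ρ], by simp only [h]; omega⟩
    rcases lt_or_ge w.length d with hltd | hged
    · -- interior block
      have hx : r ≤ w.length := hge
      obtain ⟨j, hj1, hj2⟩ : ∃ j, j * M ≤ w.length - r ∧ w.length - r < j * M + M := by
        refine ⟨(w.length - r) / M, ?_, ?_⟩
        · have h3 := Nat.mod_add_div' (w.length - r) M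
          omega
        · have h3 := Nat.mod_add_div' (w.length - r) M
          have h4 : (w.length - r) % M < M := Nat.mod_lt _ (by omega)
          omega
      have hjJ : j < J := by
        have hxlt : w.length - r < J * M := by omega
        rcases Nat.lt_or_ge j J with h' | h'
        · exact h'
        · exfalso
          have : J * M ≤ j * M := Nat.mul_le_mul_right _ h'
          omega
      set dep := r + j * M with hdep
      have hdep_le : dep ≤ w.length := by omega
      obtain ⟨v, hv⟩ := exists_ofFn_take w dep hdep_le
      refine ⟨some (Sum.inl ⟨⟨j, hjJ⟩, v⟩), w.drop dep, ?_, ?_⟩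
      · rw [show ρ (some (Sum.inl ⟨⟨j, hjJ⟩, v⟩)) = List.ofFn v from rfl, hv,
          List.take_append_drop]
      · show (w.drop dep).length ≤ m
        rw [List.length_drop]
        omega
    · -- bottom block
      obtain ⟨v, hv⟩ := exists_ofFn_take w d (by omega)
      have hsplit : w = List.ofFn v ++ w.drop d := by rw [hv, List.take_append_drop]
      have hlen_drop : (w.drop d).length = w.length - d := List.length_drop
      refine ⟨some (Sum.inr v), w.drop d, hsplit, ?_⟩
      show (w.drop d).length ≤ h (some (Sum.inr v))
      rcases eq_or_lt_of_le hwl with heq | hlt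
      · -- w.length = ℓ: the block must have full height m
        have hcv : c v := by
          have hb : bval w = bval (List.ofFn v) * 2 ^ (w.drop d).length + bval (w.drop d) := by
            conv_lhs => rw [hsplit]
            exact bval_append _ _
          have hdl : (w.drop d).length = m := by omega
          rw [hdl] at hb
          have : 2 ^ m * bval (List.ofFn v) ≤ bval w := by
            rw [hb]; nlinarith [Nat.zero_le (bval (w.drop d))]
          rw [heq] at hw
          simp only [c]
          omega
        simp only [h, if_pos hcv]
        omega
      · have : h (some (Sum.inr v)) ≥ m - 1 := by
          simp only [h]
          split <;> omega
        omega
  have hq := qq_le_prod (Z := Z) hinv ρ h cover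
  -- abbreviations
  set L : ℕ → ℝ := fun k => Real.log (qq Z (2 ^ (k + 1) - 1)) with hL
  set Snat : ℕ := ∑ j ∈ Finset.range J, 2 ^ (r + j * M) with hSnat
  set Knat : ℕ := (Finset.univ.filter c).card with hKnat
  set K'nat : ℕ := (Finset.univ.filter (fun v => ¬ c v)).card with hK'nat
  have hcard_fun : ∀ k : ℕ, Fintype.card (Fin k → Fin 2) = 2 ^ k := by
    intro k; simp [Fintype.card_fun]
  have hKK' : Knat + K'nat = 2 ^ d := by
    rw [hKnat, hK'nat, Finset.card_filter_add_card_filter_not]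
    simp [hcard_fun d]
  -- compute the sum of logs
  have hqpos : ∀ k : ℕ, (0:ℝ) < (qq Z k : ℝ) := by
    intro k; exact_mod_cast qq_pos hZ k
  have hsum : ∑ i : I, L (h i)
      = L m + ((Snat : ℝ) * L m + ((Knat : ℝ) * L m + (K'nat : ℝ) * L (m - 1))) := by
    rw [Fintype.sum_option, Fintype.sum_sum_type]
    congr 1
    congr 1
    · -- sigma part
      rw [← Finset.univ_sigma_univ, Finset.sum_sigma]
      have : ∀ j : Fin J, ∑ v : Fin (r + j.val * M) → Fin 2,
          L (h (some (Sum.inl ⟨j, v⟩))) = (2:ℝ) ^ (r + j.val * M) * L m := by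
        intro j
        have : ∀ v : Fin (r + j.val * M) → Fin 2, L (h (some (Sum.inl ⟨j, v⟩))) = L m := by
          intro v; rfl
        rw [Finset.sum_congr rfl (fun v _ => this v), Finset.sum_const, Finset.card_univ,
          hcard_fun, nsmul_eq_mul]
        push_cast
        ring
      rw [Finset.sum_congr rfl (fun j _ => this j), ← Finset.sum_mul]
      congr 1
      rw [hSnat]
      push_cast
      exact Fin.sum_univ_eq_sum_range (fun j => (2:ℝ) ^ (r + j * M)) J
    · -- bottom part
      have : ∀ v : Fin d → Fin 2, L (h (some (Sum.inr v)))
          = if c v then L m else L (m - 1) := by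
        intro v
        by_cases hcv : c v
        · simp only [h, if_pos hcv]
        · simp only [h, if_neg hcv]
      rw [Finset.sum_congr rfl (fun v _ => this v), Finset.sum_ite, Finset.sum_const,
        Finset.sum_const, nsmul_eq_mul, nsmul_eq_mul]
  -- geometric sum identity
  have hS : (Snat : ℝ) * ((2:ℝ) ^ M - 1) = (2:ℝ) ^ d - (2:ℝ) ^ r := by
    have h2M : ((2:ℝ) ^ M) ≠ 1 := by
      have : (2:ℝ) ^ M ≥ 2 ^ 1 := by
        apply pow_le_pow_right₀ (by norm_num) (by omega)
      norm_num at this; linarith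
    have e1 : (Snat : ℝ) = (2:ℝ) ^ r * ∑ j ∈ Finset.range J, ((2:ℝ) ^ M) ^ j := by
      rw [hSnat, Finset.mul_sum]
      push_cast
      refine Finset.sum_congr rfl (fun j _ => ?_)
      rw [pow_add, pow_mul']
    rw [e1, mul_assoc, geom_sum_mul]
    rw [mul_sub, mul_one, ← pow_mul, ← pow_add, show r + M * J = d by rw [Nat.mul_comm M J]; exact hdJr]
  -- bound on Knat
  have hKb : (Knat : ℝ) * (2:ℝ) ^ m ≤ (n : ℝ) - (2:ℝ) ^ ℓ + (2:ℝ) ^ m := by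
    have hnat : Knat * 2 ^ m ≤ (n - 2 ^ ℓ) + 2 ^ m := by
      set t := (n - 2 ^ ℓ) / 2 ^ m with ht
      have hKt : Knat ≤ t + 1 := by
        rw [hKnat]
        have := Finset.card_le_card_of_injOn (s := Finset.univ.filter c)
          (t := Finset.range (t + 1)) (fun v => bval (List.ofFn v))
          (by
            intro v hv
            rw [Finset.mem_coe, Finset.mem_filter] at hv
            have hcv := hv.2
            rw [Finset.mem_coe, Finset.mem_range, Nat.lt_succ_iff, ht]
            rw [Nat.le_div_iff_mul_le (Nat.pow_pos (by norm_num))]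
            simp only [c] at hcv
            show bval (List.ofFn v) * 2 ^ m ≤ (n - 2 ^ ℓ)
            have hcomm : bval (List.ofFn v) * 2 ^ m = 2 ^ m * bval (List.ofFn v) :=
              Nat.mul_comm _ _
            omega)
          (by
            intro v hv w hw hvw
            have := bval_inj (v := List.ofFn v) (w := List.ofFn w) (by simp) hvw
            exact List.ofFn_inj.mp this)
        simpa using this
      have h3 : t * 2 ^ m ≤ n - 2 ^ ℓ := by
        rw [ht]; exact Nat.div_mul_le_self _ _
      calc Knat * 2 ^ m ≤ (t + 1) * 2 ^ m := Nat.mul_le_mul_right _ hKt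
        _ = t * 2 ^ m + 2 ^ m := by ring
        _ ≤ (n - 2 ^ ℓ) + 2 ^ m := by omega
    have := (Nat.cast_le (α := ℝ)).mpr hnat
    push_cast [Nat.cast_sub h1] at this
    linarith
  -- define X and Y
  refine ⟨((Snat : ℝ) + Knat) * ((2:ℝ) ^ (m + 1) - 1),
    (K'nat : ℝ) * ((2:ℝ) ^ ((m - 1) + 1) - 1), ?_, ?_, ?_, ?_, ?_⟩
  · have := two_pow_sub_one_pos m
    positivity
  · have := two_pow_sub_one_pos (m - 1)
    positivity
  · -- X + Y ≤ n + 2 ^ m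
    have hm1 : (m - 1) + 1 = m := by omega
    have e1 : (K'nat : ℝ) = (2:ℝ) ^ d - (Knat : ℝ) := by
      have := hKK'
      have h4 : ((Knat + K'nat : ℕ) : ℝ) = ((2 ^ d : ℕ) : ℝ) := by rw [this]
      push_cast at h4
      linarith
    have hpm : (2:ℝ) ^ (m + 1) = 2 * 2 ^ m := by rw [pow_succ]; ring
    have hdm' : (2:ℝ) ^ d * (2:ℝ) ^ m = (2:ℝ) ^ ℓ := by rw [← pow_add, hdm]
    have hX : ((Snat : ℝ) + Knat) * ((2:ℝ) ^ (m + 1) - 1)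
        = ((2:ℝ) ^ d - 2 ^ r) + (Knat : ℝ) * ((2:ℝ) ^ (m + 1) - 1) := by
      have hMm : (2:ℝ) ^ M = (2:ℝ) ^ (m + 1) := by rw [hM]
      rw [add_mul, ← hMm, hS]
    rw [hX, e1, hm1, hpm]
    have hr0 : (0:ℝ) ≤ (2:ℝ) ^ r := by positivity
    nlinarith [hKb]
  · -- Y = 0 in the full case
    intro hn
    have hall : ∀ v : Fin d → Fin 2, c v := by
      intro v
      have hb := bval_lt (List.ofFn v)
      rw [List.length_ofFn] at hb
      have hmd : 2 ^ m * 2 ^ d = 2 ^ ℓ := by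
        rw [← pow_add, show m + d = ℓ by omega]
      have hl1 : (2:ℕ) ^ (ℓ + 1) = 2 * 2 ^ ℓ := by rw [pow_succ]; ring
      have hmono : 2 ^ m * bval (List.ofFn v) + 2 ^ m ≤ 2 ^ m * 2 ^ d := by
        rw [← Nat.mul_succ]
        exact Nat.mul_le_mul_left _ (by omega)
      have h2m : 1 ≤ 2 ^ m := Nat.one_le_two_pow
      simp only [c]
      omega
    have : K'nat = 0 := by
      rw [hK'nat, Finset.card_eq_zero, Finset.filter_eq_empty_iff]
      intro v _
      simp only [Decidable.not_not]
      exact hall v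
    rw [this]
    push_cast
    ring
  · -- the log estimate
    have step1 : Real.log (qq Z n) ≤ Real.log ((∏ i : I, qq Z (2 ^ (h i + 1) - 1) : ℕ) : ℝ) := by
      apply Real.log_le_log (hqpos n)
      exact_mod_cast hq
    have step2 : Real.log ((∏ i : I, qq Z (2 ^ (h i + 1) - 1) : ℕ) : ℝ) = ∑ i : I, L (h i) := by
      push_cast
      rw [Real.log_prod]
      intro i _
      exact ne_of_gt (hqpos _)
    have hm1 : (m - 1) + 1 = m := by omega
    have haX : aZ Z m * (((Snat : ℝ) + Knat) * ((2:ℝ) ^ (m + 1) - 1))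
        = ((Snat : ℝ) + Knat) * L m := by
      rw [mul_comm ((Snat : ℝ) + Knat) _, ← mul_assoc, aZ_mul]
      rw [hL, mul_comm]
    have haY : aZ Z (m - 1) * ((K'nat : ℝ) * ((2:ℝ) ^ ((m - 1) + 1) - 1))
        = (K'nat : ℝ) * L (m - 1) := by
      rw [mul_comm (K'nat : ℝ) _, ← mul_assoc, aZ_mul]
      rw [hL, mul_comm]
    rw [haX, haY]
    calc Real.log (qq Z n) ≤ ∑ i : I, L (h i) := step1.trans_eq step2
      _ = L m + ((Snat : ℝ) * L m + ((Knat : ℝ) * L m + (K'nat : ℝ) * L (m - 1))) := hsum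
      _ = Real.log (qq Z (2 ^ (m + 1) - 1)) + ((Snat : ℝ) + Knat) * L m
          + (K'nat : ℝ) * L (m - 1) := by rw [hL]; ring

end TreeShift2

section TreeShift3
variable {A : Type} [Fintype A] [Nonempty A] {Z : Set (List (Fin 2) → A)}

lemma cast_pow_sub_one (k : ℕ) : ((2 ^ (k + 1) - 1 : ℕ) : ℝ) = (2 : ℝ) ^ (k + 1) - 1 := by
  have h : 1 ≤ (2:ℕ) ^ (k + 1) := Nat.one_le_two_pow
  push_cast [Nat.cast_sub h]
  ring

lemma aZ_zero : aZ Z 0 = Real.log (qq Z 1) := by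
  simp [aZ]
  norm_num

lemma aZ_le_aZ_zero (hinv : ∀ s : Fin 2, ∀ τ ∈ Z, (fun w => τ (s :: w)) ∈ Z)
    (hZ : Z.Nonempty) (ℓ : ℕ) : aZ Z ℓ ≤ aZ Z 0 := by
  rw [aZ_zero]
  rw [aZ, div_le_iff₀ (two_pow_sub_one_pos ℓ)]
  have h := qq_le_pow hinv hZ (2 ^ (ℓ + 1) - 1)
  have hlog : Real.log (qq Z (2 ^ (ℓ + 1) - 1)) ≤
      Real.log ((qq Z 1 : ℝ) ^ (2 ^ (ℓ + 1) - 1 : ℕ)) := by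
    apply Real.log_le_log (by exact_mod_cast qq_pos hZ _)
    exact_mod_cast h
  rw [Real.log_pow] at hlog
  calc Real.log (qq Z (2 ^ (ℓ + 1) - 1))
      ≤ ((2 ^ (ℓ + 1) - 1 : ℕ) : ℝ) * Real.log (qq Z 1) := hlog
    _ = Real.log (qq Z 1) * ((2:ℝ) ^ (ℓ + 1) - 1) := by
        rw [cast_pow_sub_one]; ring

lemma limsup_aZ_le (hinv : ∀ s : Fin 2, ∀ τ ∈ Z, (fun w => τ (s :: w)) ∈ Z)
    (hZ : Z.Nonempty) (m : ℕ) : limsup (fun ℓ => aZ Z ℓ) atTop ≤ aZ Z m := by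
  have hco : IsCoboundedUnder (· ≤ ·) atTop (fun ℓ => aZ Z ℓ) :=
    isCoboundedUnder_le_of_eventually_le atTop
      (x := 0) (Eventually.of_forall fun ℓ => aZ_nonneg hZ ℓ)
  rcases Nat.eq_zero_or_pos m with hm | hm
  · subst hm
    exact limsup_le_of_le hco (Eventually.of_forall fun ℓ => aZ_le_aZ_zero hinv hZ ℓ)
  -- m ≥ 1 : use the key lemma with n = 2^(ℓ+1) - 1
  set C : ℝ := Real.log (qq Z (2 ^ (m + 1) - 1)) + aZ Z m * 2 ^ m with hC
  have hkey : ∀ ℓ : ℕ, m + 1 ≤ ℓ → aZ Z ℓ ≤ aZ Z m + C / ((2:ℝ) ^ (ℓ + 1) - 1) := by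
    intro ℓ hℓ
    have h2 : (2:ℕ) ^ ℓ ≤ 2 ^ (ℓ + 1) - 1 := by
      have : (2:ℕ) ^ (ℓ + 1) = 2 * 2 ^ ℓ := by rw [pow_succ]; ring
      have := Nat.one_le_two_pow (n := ℓ)
      omega
    have h3 : (2:ℕ) ^ (ℓ + 1) - 1 < 2 ^ (ℓ + 1) := by
      have := Nat.one_le_two_pow (n := ℓ + 1)
      omega
    obtain ⟨X, Y, hX0, hY0, hXY, hYfull, hlog⟩ :=
      key_lemma (Z := Z) hinv hZ m ℓ (2 ^ (ℓ + 1) - 1) hm hℓ h2 h3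
    have hY := hYfull rfl
    rw [hY] at hXY
    have hXn : X ≤ ((2 ^ (ℓ + 1) - 1 : ℕ) : ℝ) + 2 ^ m := by linarith
    have hbound : Real.log (qq Z (2 ^ (ℓ + 1) - 1)) ≤
        Real.log (qq Z (2 ^ (m + 1) - 1)) + aZ Z m * (((2 ^ (ℓ + 1) - 1 : ℕ) : ℝ) + 2 ^ m) := by
      have h4 : aZ Z m * X ≤ aZ Z m * (((2 ^ (ℓ + 1) - 1 : ℕ) : ℝ) + 2 ^ m) :=
        mul_le_mul_of_nonneg_left hXn (aZ_nonneg hZ m)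
      have h5 : aZ Z (m - 1) * Y = 0 := by rw [hY, mul_zero]
      linarith
    rw [aZ, div_le_iff₀ (two_pow_sub_one_pos ℓ)]
    rw [cast_pow_sub_one] at hbound
    have hD : (0:ℝ) < (2:ℝ) ^ (ℓ + 1) - 1 := two_pow_sub_one_pos ℓ
    calc Real.log (qq Z (2 ^ (ℓ + 1) - 1))
        ≤ Real.log (qq Z (2 ^ (m + 1) - 1)) + aZ Z m * (((2:ℝ) ^ (ℓ + 1) - 1) + 2 ^ m) := hbound
      _ = aZ Z m * ((2:ℝ) ^ (ℓ + 1) - 1) + C := by rw [hC]; ring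
      _ = (aZ Z m + C / ((2:ℝ) ^ (ℓ + 1) - 1)) * ((2:ℝ) ^ (ℓ + 1) - 1) := by
          field_simp
  -- the bounding sequence tends to aZ Z m
  have htend : Tendsto (fun ℓ : ℕ => aZ Z m + C / ((2:ℝ) ^ (ℓ + 1) - 1)) atTop
      (nhds (aZ Z m)) := by
    have h1 : Tendsto (fun ℓ : ℕ => (2:ℝ) ^ (ℓ + 1) - 1) atTop atTop := by
      apply tendsto_atTop_add_const_right
      exact (tendsto_pow_atTop_atTop_of_one_lt (by norm_num : (1:ℝ) < 2)).comp
        (tendsto_add_atTop_nat 1)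
    have h2 : Tendsto (fun ℓ : ℕ => C / ((2:ℝ) ^ (ℓ + 1) - 1)) atTop (nhds 0) :=
      Tendsto.div_atTop tendsto_const_nhds h1
    have := Tendsto.add (tendsto_const_nhds (x := aZ Z m) (f := atTop (α := ℕ))) h2
    simpa using this
  refine le_trans (limsup_le_limsup ?_ hco (htend.isBoundedUnder_le)) ?_
  · filter_upwards [eventually_ge_atTop (m + 1)] with ℓ hℓ
    exact hkey ℓ hℓ
  · rw [htend.limsup_eq]

lemma tendsto_aZ (hinv : ∀ s : Fin 2, ∀ τ ∈ Z, (fun w => τ (s :: w)) ∈ Z)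
    (hZ : Z.Nonempty) : Tendsto (fun ℓ => aZ Z ℓ) atTop (nhds (⨅ m, aZ Z m)) := by
  have hbdd : BddBelow (Set.range fun m => aZ Z m) :=
    ⟨0, by rintro x ⟨m, rfl⟩; exact aZ_nonneg hZ m⟩
  apply tendsto_of_le_liminf_of_limsup_le
  · apply le_liminf_of_le
    · exact isCoboundedUnder_ge_of_eventually_le atTop
        (Eventually.of_forall fun ℓ => aZ_le_aZ_zero hinv hZ ℓ)
    · exact Eventually.of_forall fun ℓ => ciInf_le hbdd ℓ
  · exact le_ciInf fun m => limsup_aZ_le hinv hZ m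
  · exact isBoundedUnder_of_eventually_le
      (Eventually.of_forall fun ℓ => aZ_le_aZ_zero hinv hZ ℓ)
  · exact isBoundedUnder_of_eventually_le (α := ℝᵒᵈ)
      (Eventually.of_forall fun ℓ => aZ_nonneg hZ ℓ)

lemma limsup_ratio_le (hinv : ∀ s : Fin 2, ∀ τ ∈ Z, (fun w => τ (s :: w)) ∈ Z)
    (hZ : Z.Nonempty) (m : ℕ) (hm : 1 ≤ m) :
    limsup (fun n : ℕ => Real.log (qq Z n) / n) atTop ≤ max (aZ Z m) (aZ Z (m - 1)) := by
  set b : ℝ := max (aZ Z m) (aZ Z (m - 1)) with hb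
  have hb0 : 0 ≤ b := le_max_of_le_left (aZ_nonneg hZ m)
  set C : ℝ := Real.log (qq Z (2 ^ (m + 1) - 1)) + b * 2 ^ m with hC
  have hkey : ∀ n : ℕ, 2 ^ (m + 2) ≤ n → Real.log (qq Z n) / n ≤ b + C / n := by
    intro n hn
    have hn0 : n ≠ 0 := by
      have : 0 < (2:ℕ) ^ (m + 2) := Nat.pow_pos (by norm_num)
      omega
    have hnR : (0:ℝ) < n := by
      have : 0 < n := Nat.pos_of_ne_zero hn0
      exact_mod_cast this
    set ℓ := Nat.log 2 n with hℓ
    have h1 : 2 ^ ℓ ≤ n := Nat.pow_log_le_self 2 hn0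
    have h2 : n < 2 ^ (ℓ + 1) := Nat.lt_pow_succ_log_self (by norm_num) n
    have h3 : m + 1 ≤ ℓ := by
      have := (Nat.le_log_iff_pow_le (by norm_num) hn0).mpr hn
      omega
    obtain ⟨X, Y, hX0, hY0, hXY, _, hlog⟩ := key_lemma (Z := Z) hinv hZ m ℓ n hm h3 h1 h2
    have hmax : aZ Z m * X + aZ Z (m - 1) * Y ≤ b * ((n:ℝ) + 2 ^ m) := by
      have e1 : aZ Z m * X ≤ b * X := mul_le_mul_of_nonneg_right (le_max_left _ _) hX0
      have e2 : aZ Z (m - 1) * Y ≤ b * Y := mul_le_mul_of_nonneg_right (le_max_right _ _) hY0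
      have e3 : b * X + b * Y ≤ b * ((n:ℝ) + 2 ^ m) := by
        rw [← mul_add]
        exact mul_le_mul_of_nonneg_left hXY hb0
      linarith
    have hlog2 : Real.log (qq Z n) ≤ b * n + C := by
      rw [hC]; linarith
    rw [div_le_iff₀ hnR]
    calc Real.log (qq Z n) ≤ b * n + C := hlog2
      _ = (b + C / n) * n := by field_simp
  have htend : Tendsto (fun n : ℕ => b + C / n) atTop (nhds b) := by
    have h2 : Tendsto (fun n : ℕ => C / n) atTop (nhds 0) :=
      Tendsto.div_atTop tendsto_const_nhds tendsto_natCast_atTop_atTop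
    have := Tendsto.add (tendsto_const_nhds (x := b) (f := atTop (α := ℕ))) h2
    simpa using this
  have hco : IsCoboundedUnder (· ≤ ·) atTop (fun n : ℕ => Real.log (qq Z n) / n) := by
    apply isCoboundedUnder_le_of_eventually_le atTop (x := 0)
    filter_upwards [eventually_ge_atTop 1] with n hn
    have : (0:ℝ) < n := by exact_mod_cast hn
    exact div_nonneg (log_qq_nonneg hZ n) (le_of_lt this)
  refine le_trans (limsup_le_limsup ?_ hco (htend.isBoundedUnder_le)) ?_
  · filter_upwards [eventually_ge_atTop (2 ^ (m + 2))] with n hn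
    exact hkey n hn
  · rw [htend.limsup_eq]

end TreeShift3

/-- For a tree shift `Z` on the binary tree over a finite alphabet, the upper
intermediate entropy does not exceed the entropy:
`limsup (log q_Z(n))/n ≤ inf_m (log q_Z(2^{m+1}−1))/(2^{m+1}−1)`,
where `q_Z(n)` counts configurations of `Z` on the first `n` vertices in
breadth-first order (word `w` has index `2^{|w|} + val(w)`). -/
theorem intermediate_entropy_le_entropy
    (A : Type) [Fintype A] [Nonempty A]
    (Z : Set (List (Fin 2) → A)) (hZ : Z.Nonempty)
    (hinv : ∀ s : Fin 2, ∀ τ ∈ Z, (fun w => τ (s :: w)) ∈ Z) :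
    limsup (fun n : ℕ =>
        Real.log (Nat.card {f : {w : List (Fin 2) // 2 ^ w.length + bval w ≤ n} → A |
          ∃ τ ∈ Z, ∀ w, f w = τ w.val}) / (n : ℝ)) atTop
      ≤ ⨅ m : ℕ,
          Real.log (Nat.card
              {f : {w : List (Fin 2) // 2 ^ w.length + bval w ≤ 2 ^ (m + 1) - 1} → A |
                ∃ τ ∈ Z, ∀ w, f w = τ w.val}) / ((2 : ℝ) ^ (m + 1) - 1) := by
  have hL : Tendsto (fun ℓ => aZ Z ℓ) atTop (nhds (⨅ m, aZ Z m)) := tendsto_aZ hinv hZ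
  have hc : Tendsto (fun m : ℕ => max (aZ Z m) (aZ Z (m - 1))) atTop
      (nhds (⨅ m, aZ Z m)) := by
    have h2 : Tendsto (fun m : ℕ => aZ Z (m - 1)) atTop (nhds (⨅ m, aZ Z m)) :=
      hL.comp (tendsto_sub_atTop_nat 1)
    have h3 := hL.max h2
    simpa using h3
  have hmain : limsup (fun n : ℕ => Real.log (qq Z n) / n) atTop ≤ ⨅ m, aZ Z m := by
    apply ge_of_tendsto hc
    filter_upwards [eventually_ge_atTop 1] with m hm
    exact limsup_ratio_le hinv hZ m hm
  exact hmain
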